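/- For every λ > 0 and q > 0, the integer translates of the symmetrized kernel form an exact partition of unity: for every x ∈ ℝ, the series ∑_{k ∈ ℤ} Φ(x − k) converges and equals 1. -/

import Mathlib

/-- Deformed activation function `g_{q,λ}(x) = (e^{λx} − q e^{−λx})/(e^{λx} + q e^{−λx})`. -/
noncomputable def gq (q lam x : ℝ) : ℝ :=
  (Real.exp (lam * x) - q * Real.exp (-(lam * x))) /
    (Real.exp (lam * x) + q * Real.exp (-(lam * x)))

/-- Localized kernel `M_{q,λ}(x) = (1/4)(g_{q,λ}(x+1) − g_{q,λ}(x−1))`. -/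
noncomputable def Mq (q lam x : ℝ) : ℝ :=
  (gq q lam (x + 1) - gq q lam (x - 1)) / 4

/-- Symmetrized kernel `Φ(x) = (1/2)(M_{q,λ}(x) + M_{1/q,λ}(x))`. -/
noncomputable def Phi (q lam x : ℝ) : ℝ :=
  (Mq q lam x + Mq q⁻¹ lam x) / 2

/-!
`g_{q,λ}` is a monotone sigmoid running from `-1` at `-∞` to `1` at `+∞`, so the sum of
`g(x - k + 1) - g(x - k - 1)` over `k ∈ ℤ` telescopes (with step two) to `2 · (1 - (-1)) = 4`.
Monotonicity makes all terms nonnegative, which turns the telescoping limit into an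
unconditional sum. Hence the translates of each `M_{q,λ}` already sum to `1`, and so do those
of their average `Φ`.
-/

open Filter Topology

lemma hasSum_nat_sub_of_monotone {u : ℕ → ℝ} {b : ℝ} (hu : Monotone u)
    (hb : Tendsto u atTop (𝓝 b)) : HasSum (fun n => u (n + 1) - u n) (b - u 0) := by
  rw [hasSum_iff_tendsto_nat_of_nonneg fun n => sub_nonneg.2 (hu n.le_succ)]
  simpa only [Finset.sum_range_sub] using hb.sub_const (u 0)

lemma hasSum_int_sub_of_monotone {u : ℤ → ℝ} {a b : ℝ} (hu : Monotone u)
    (ha : Tendsto u atBot (𝓝 a)) (hb : Tendsto u atTop (𝓝 b)) :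
    HasSum (fun k => u (k + 1) - u k) (b - a) := by
  have hnat : HasSum (fun n : ℕ => u (n + 1) - u n) (b - u 0) := by
    simpa using hasSum_nat_sub_of_monotone (u := fun n : ℕ => u n)
      (fun _ _ h => hu (Int.ofNat_le.2 h)) (hb.comp tendsto_natCast_atTop_atTop)
  have hneg : HasSum (fun n : ℕ => u (-(n + 1) + 1) - u (-(n + 1))) (u 0 - a) := by
    have h := hasSum_nat_sub_of_monotone (u := fun n : ℕ => -u (-n))
      (fun _ _ h => neg_le_neg (hu (neg_le_neg (Int.ofNat_le.2 h))))
      (ha.comp (tendsto_neg_atTop_atBot.comp tendsto_natCast_atTop_atTop)).neg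
    simp only [Nat.cast_add, Nat.cast_one, CharP.cast_eq_zero, neg_zero, neg_sub_neg] at h
    exact h.congr_fun fun n => by ring_nf
  have h := HasSum.of_nat_of_neg_add_one (f := fun k => u (k + 1) - u k) hnat hneg
  rwa [sub_add_sub_cancel] at h

lemma hasSum_int_add_two_sub_of_monotone {u : ℤ → ℝ} {a b : ℝ} (hu : Monotone u)
    (ha : Tendsto u atBot (𝓝 a)) (hb : Tendsto u atTop (𝓝 b)) :
    HasSum (fun k => u (k + 2) - u k) (2 * (b - a)) := by
  have hshift : Monotone fun k => u (k + 1) := fun _ _ h => hu (by omega)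
  have h := hasSum_int_sub_of_monotone (hu.add hshift)
    (ha.add (ha.comp (tendsto_atBot_add_const_right _ 1 tendsto_id)))
    (hb.add (hb.comp (tendsto_atTop_add_const_right _ 1 tendsto_id)))
  convert h using 1
  · funext k
    simp only [add_assoc, one_add_one_eq_two]
    ring
  · ring

section gq

variable {q lam : ℝ}

lemma gq_eq_one_sub (hq : 0 < q) (t : ℝ) :
    gq q lam t = 1 - 2 * q / (Real.exp (2 * lam * t) + q) := by
  have hexp : Real.exp (2 * lam * t) = Real.exp (lam * t) * Real.exp (lam * t) := by
    rw [← Real.exp_add]; ring_nf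
  rw [gq, hexp, Real.exp_neg]
  field_simp
  ring

lemma gq_monotone (hq : 0 < q) (hlam : 0 ≤ lam) : Monotone (gq q lam) := by
  intro s t hst
  simp only [gq_eq_one_sub hq]
  gcongr

lemma tendsto_gq_atTop (hq : 0 < q) (hlam : 0 < lam) : Tendsto (gq q lam) atTop (𝓝 1) := by
  have hden : Tendsto (fun t => Real.exp (2 * lam * t) + q) atTop atTop :=
    tendsto_atTop_add_const_right _ q
      (Real.tendsto_exp_atTop.comp (tendsto_id.const_mul_atTop (by positivity)))
  simpa only [funext (gq_eq_one_sub (lam := lam) hq), sub_zero] using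
    tendsto_const_nhds.sub (tendsto_const_nhds.div_atTop hden)

lemma tendsto_gq_atBot (hq : 0 < q) (hlam : 0 < lam) : Tendsto (gq q lam) atBot (𝓝 (-1)) := by
  have hexp : Tendsto (fun t => Real.exp (2 * lam * t)) atBot (𝓝 0) :=
    Real.tendsto_exp_atBot.comp (tendsto_id.const_mul_atBot (by positivity))
  have hlim : (1 : ℝ) - 2 * q / (0 + q) = -1 := by field_simp; ring
  rw [funext (gq_eq_one_sub (lam := lam) hq), ← hlim]
  exact tendsto_const_nhds.sub
    (tendsto_const_nhds.div (hexp.add tendsto_const_nhds) (by positivity))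

end gq

lemma hasSum_Mq {q lam : ℝ} (hlam : 0 < lam) (hq : 0 < q) (x : ℝ) :
    HasSum (fun k : ℤ => Mq q lam (x - k)) 1 := by
  set u : ℤ → ℝ := fun k => -gq q lam (x + 1 - k)
  have hu : Monotone u := fun i j hij =>
    neg_le_neg (gq_monotone hq hlam.le (by linarith [(Int.cast_le (R := ℝ)).2 hij]))
  have ha : Tendsto u atBot (𝓝 (-1)) := by
    have harg : Tendsto (fun k : ℤ => x + 1 - k) atBot atTop := by
      simpa only [sub_eq_add_neg, Function.comp_def, id] using tendsto_atTop_add_const_left _ (x + 1)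
        (tendsto_neg_atBot_atTop.comp (tendsto_intCast_atBot_iff.2 tendsto_id))
    exact ((tendsto_gq_atTop hq hlam).comp harg).neg
  have hb : Tendsto u atTop (𝓝 1) := by
    have harg : Tendsto (fun k : ℤ => x + 1 - k) atTop atBot := by
      simpa only [sub_eq_add_neg, Function.comp_def, id] using tendsto_atBot_add_const_left _ (x + 1)
        (tendsto_neg_atTop_atBot.comp (tendsto_intCast_atTop_iff.2 tendsto_id))
    simpa using ((tendsto_gq_atBot hq hlam).comp harg).neg
  rw [show (1 : ℝ) = 2 * (1 - -1) / 4 by norm_num]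
  refine ((hasSum_int_add_two_sub_of_monotone hu ha hb).div_const 4).congr_fun fun k => ?_
  simp only [Mq, u]
  push_cast
  ring_nf

theorem stmt_9 (lam q : ℝ) (hlam : 0 < lam) (hq : 0 < q) (x : ℝ) :
    HasSum (fun k : ℤ => Phi q lam (x - k)) 1 := by
  rw [show (1 : ℝ) = (1 + 1) / 2 by norm_num]
  exact ((hasSum_Mq hlam hq x).add (hasSum_Mq hlam (inv_pos.2 hq) x)).div_const 2
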